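/- arXiv:2509.24653 — 2 statements merged into one kernel-verified Lean document; each statement's English description precedes it below -/
import Mathlib

section
/- Fix an integer n ≥ 1 and reals a1,a2,b1,b2,c1,c2,d1,d2,e,f,g,h, and let W be the associated restricted-form matrix. Then ‖W‖_* = (n−1)·√(C_A1+C_D1+2·|a1·d1−b1·c1|) + √( C_A1+n·C_A2+C_D1+n·C_D2 + 2·√((C_A1+n·C_A2)·(C_D1+n·C_D2) − (C_B1+n·C_B2)²) ). -/
/-!
Reindex the columns of `W` by `Fin 2 × Fin n`. Every `n × n` block of `W` has the form
`αI + βJ` and the rows `r₁, r₂` are constant on each block, so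
`WᵀW = M₁ ⊗ (I - Π) + M₂ ⊗ Π`, where `Π = J / n` is the orthogonal projection onto the
constant vectors and `M₁`, `M₂` are the `2 × 2` Gram matrices with entries `C_·1` and
`C_·1 + n C_·2`. Hence `√(WᵀW) = √M₁ ⊗ (I - Π) + √M₂ ⊗ Π`, of trace
`(n - 1) tr √M₁ + tr √M₂`. For a positive semidefinite `2 × 2` matrix `M`, Cayley–Hamilton
gives `tr √M = √(tr M + 2√(det M))`, and `det M₁ = (a1 d1 - b1 c1)²`.
-/

/-- The nuclear norm of a real matrix: the trace of the positive semidefinite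
square root of `Wᵀ * W` (equivalently, the sum of the singular values of `W`). -/
noncomputable def nuclearNorm {m k : Type*} [Fintype m] [Fintype k] [DecidableEq k]
    (W : Matrix m k ℝ) : ℝ :=
  ((Matrix.posSemidef_conjTranspose_mul_self W).1.eigenvectorUnitary.1 *
    Matrix.diagonal ((RCLike.ofReal : ℝ → ℝ) ∘ (√·) ∘ (Matrix.posSemidef_conjTranspose_mul_self W).1.eigenvalues) *
    (star (Matrix.posSemidef_conjTranspose_mul_self W).1.eigenvectorUnitary : Matrix k k ℝ)).trace

/-- The restricted-form matrix in `ℝ^{(2n+2)×(2n)}`.  Rows are indexed by the input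
tokens `a_1,…,a_n` (`Sum.inl i`), `b_1,…,b_n` (`Sum.inr (Sum.inl i)`) and the relation
tokens `r_1, r_2` (`Sum.inr (Sum.inr k)`, `k = 0, 1`); columns by the output tokens
`b_1,…,b_n` (`Sum.inl j`) and `c_1,…,c_n` (`Sum.inr j`). -/
def restrictedW (n : ℕ) (a1 a2 b1 b2 c1 c2 d1 d2 e f g h : ℝ) :
    Matrix (Fin n ⊕ Fin n ⊕ Fin 2) (Fin n ⊕ Fin n) ℝ :=
  fun r y =>
    match r, y with
    | Sum.inl i, Sum.inl j => (if i = j then a1 else 0) + a2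
    | Sum.inl i, Sum.inr j => (if i = j then c1 else 0) + c2
    | Sum.inr (Sum.inl i), Sum.inl j => (if i = j then b1 else 0) + b2
    | Sum.inr (Sum.inl i), Sum.inr j => (if i = j then d1 else 0) + d2
    | Sum.inr (Sum.inr k), Sum.inl _ => if k = 0 then e else f
    | Sum.inr (Sum.inr k), Sum.inr _ => if k = 0 then g else h

def CA1 (a1 b1 : ℝ) : ℝ := a1 ^ 2 + b1 ^ 2
def CA2 (n : ℕ) (a1 a2 b1 b2 e f : ℝ) : ℝ :=
  2 * a1 * a2 + n * a2 ^ 2 + 2 * b1 * b2 + n * b2 ^ 2 + e ^ 2 + f ^ 2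
def CD1 (c1 d1 : ℝ) : ℝ := c1 ^ 2 + d1 ^ 2
def CD2 (n : ℕ) (c1 c2 d1 d2 g h : ℝ) : ℝ :=
  2 * c1 * c2 + n * c2 ^ 2 + 2 * d1 * d2 + n * d2 ^ 2 + g ^ 2 + h ^ 2
def CB1 (a1 b1 c1 d1 : ℝ) : ℝ := a1 * c1 + b1 * d1
def CB2 (n : ℕ) (a1 a2 b1 b2 c1 c2 d1 d2 e f g h : ℝ) : ℝ :=
  a1 * c2 + a2 * c1 + n * a2 * c2 + b1 * d2 + b2 * d1 + n * b2 * d2 + e * g + f * h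

open Matrix
open scoped Kronecker MatrixOrder

section NuclearNorm

variable {m k : Type*} [Fintype m] [Fintype k] [DecidableEq k]

lemma nuclearNorm_eq_trace_sqrt (W : Matrix m k ℝ) :
    nuclearNorm W = (CFC.sqrt (Wᴴ * W)).trace := by
  have hW := posSemidef_conjTranspose_mul_self W
  rw [CFC.sqrt_eq_cfc, cfc_nnreal_eq_real _ _ hW.nonneg, hW.1.cfc_eq, IsHermitian.cfc,
    Unitary.conjStarAlgAut_apply]
  unfold nuclearNorm
  congr 4
  ext i
  simp only [Function.comp_apply, Real.sqrt.eq_1]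

lemma nuclearNorm_eq_trace_of_mul_self {W : Matrix m k ℝ} {S : Matrix k k ℝ}
    (hS : S.PosSemidef) (h : S * S = Wᴴ * W) : nuclearNorm W = S.trace := by
  rw [nuclearNorm_eq_trace_sqrt, CFC.sqrt_unique h hS.nonneg]

lemma nuclearNorm_submatrix {m' k' : Type*} [Fintype m'] [Fintype k'] [DecidableEq k']
    (W : Matrix m k ℝ) (e₁ : m' ≃ m) (e₂ : k' ≃ k) :
    nuclearNorm (W.submatrix e₁ e₂) = nuclearNorm W := by
  have hW := (posSemidef_conjTranspose_mul_self W).nonneg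
  rw [nuclearNorm_eq_trace_sqrt W]
  refine (nuclearNorm_eq_trace_of_mul_self
    ((CFC.sqrt_nonneg (Wᴴ * W)).posSemidef.submatrix e₂) ?_).trans ?_
  · rw [submatrix_mul_equiv, CFC.sqrt_mul_sqrt_self _ hW, conjTranspose_submatrix,
      submatrix_mul_equiv]
  · exact e₂.sum_comp fun i => CFC.sqrt (Wᴴ * W) i i

end NuclearNorm

lemma Matrix.mul_self_fin_two {R : Type*} [CommRing R] (M : Matrix (Fin 2) (Fin 2) R) :
    M * M = M.trace • M - M.det • 1 := by
  ext i j
  fin_cases i <;> fin_cases j <;>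
    simp [mul_apply, Fin.sum_univ_two, trace_fin_two, det_fin_two] <;> ring

lemma Matrix.PosSemidef.trace_sqrt_fin_two {M : Matrix (Fin 2) (Fin 2) ℝ} (hM : M.PosSemidef) :
    (CFC.sqrt M).trace = √(M.trace + 2 * √M.det) := by
  set δ := √M.det
  set t := √(M.trace + 2 * δ)
  have hδ : δ * δ = M.det := Real.mul_self_sqrt hM.det_nonneg
  have ht : t * t = M.trace + 2 * δ :=
    Real.mul_self_sqrt (by linarith [hM.trace_nonneg, Real.sqrt_nonneg M.det])
  -- By Cayley–Hamilton, `(M + √(det M)) / √(tr M + 2√(det M))` squares to `M`.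
  set X := t⁻¹ • (M + δ • 1)
  have hX : X.PosSemidef :=
    (hM.add (PosSemidef.one.smul (Real.sqrt_nonneg _))).smul (inv_nonneg.2 (Real.sqrt_nonneg _))
  have hXX : X * X = M := by
    rcases eq_or_ne t 0 with h0 | h0
    · have hM0 : M = 0 := hM.trace_eq_zero_iff.1 (by
        linarith [hM.trace_nonneg, Real.sqrt_nonneg M.det, show t * t = 0 by simp [h0]])
      simp [X, h0, hM0]
    · calc X * X = (t * t)⁻¹ • (M * M + (2 * δ) • M + (δ * δ) • 1) := by
            simp only [X, Matrix.smul_mul, Matrix.mul_smul, add_mul, mul_add, Matrix.one_mul,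
              Matrix.mul_one, smul_smul, mul_inv]
            module
        _ = M := by
            have hCH : M * M + (2 * δ) • M + (δ * δ) • 1 = (t * t) • M := by
              rw [mul_self_fin_two, hδ, ht]
              module
            rw [hCH, inv_smul_smul₀ (mul_ne_zero h0 h0)]
  rw [CFC.sqrt_unique hXX hX.nonneg]
  simp only [X, trace_smul, trace_add, trace_one, Fintype.card_fin, smul_eq_mul]
  rw [Nat.cast_ofNat, mul_comm δ, ← ht]
  rcases eq_or_ne t 0 with h0 | h0
  · simp [h0]
  · exact inv_mul_cancel_left₀ h0 t

section KroneckerProjection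

variable {R ι κ l : Type*} [CommRing R] [DecidableEq ι]

lemma conjTranspose_kronecker_one_sub_add_kronecker [StarRing R] {p : Matrix ι ι R}
    (hp : p.IsHermitian) (X Y : Matrix l κ R) :
    (X ⊗ₖ (1 - p) + Y ⊗ₖ p)ᴴ = Xᴴ ⊗ₖ (1 - p) + Yᴴ ⊗ₖ p := by
  rw [conjTranspose_add, conjTranspose_kronecker, conjTranspose_kronecker, hp.eq,
    (isHermitian_one.sub hp).eq]

variable [Fintype ι] [Fintype κ]

lemma kronecker_one_sub_add_kronecker_mul {p : Matrix ι ι R} (hp : IsIdempotentElem p)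
    (X Y : Matrix l κ R) (X' Y' : Matrix κ l R) :
    (X ⊗ₖ (1 - p) + Y ⊗ₖ p) * (X' ⊗ₖ (1 - p) + Y' ⊗ₖ p)
      = (X * X') ⊗ₖ (1 - p) + (Y * Y') ⊗ₖ p := by
  simp only [Matrix.add_mul, Matrix.mul_add, ← mul_kronecker_mul, hp.eq, hp.one_sub.eq,
    hp.mul_one_sub_self, hp.one_sub_mul_self, kronecker_zero, add_zero, zero_add]

variable [DecidableEq κ]

lemma nuclearNorm_of_conjTranspose_mul_self_eq [Fintype l] {W : Matrix l (κ × ι) ℝ}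
    {p : Matrix ι ι ℝ} (hp : IsStarProjection p) {M N : Matrix κ κ ℝ} (hM : M.PosSemidef)
    (hN : N.PosSemidef) (hW : Wᴴ * W = M ⊗ₖ (1 - p) + N ⊗ₖ p) :
    nuclearNorm W = (CFC.sqrt M).trace * (1 - p).trace + (CFC.sqrt N).trace * p.trace := by
  rw [nuclearNorm_eq_trace_of_mul_self (S := CFC.sqrt M ⊗ₖ (1 - p) + CFC.sqrt N ⊗ₖ p),
    trace_add, trace_kronecker, trace_kronecker]
  · exact ((CFC.sqrt_nonneg M).posSemidef.kronecker hp.one_sub.nonneg.posSemidef).add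
      ((CFC.sqrt_nonneg N).posSemidef.kronecker hp.nonneg.posSemidef)
  · rw [kronecker_one_sub_add_kronecker_mul hp.isIdempotentElem,
      CFC.sqrt_mul_sqrt_self M hM.nonneg, CFC.sqrt_mul_sqrt_self N hN.nonneg, hW]

end KroneckerProjection

noncomputable def constProj (ι : Type*) [Fintype ι] : Matrix ι ι ℝ :=
  (Fintype.card ι : ℝ)⁻¹ • of fun _ _ => 1

section constProj

variable {ι : Type*} [Fintype ι] [Nonempty ι]

lemma card_smul_constProj : (Fintype.card ι : ℝ) • constProj ι = of fun _ _ => 1 := by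
  simp [constProj, smul_smul]

lemma isStarProjection_constProj : IsStarProjection (constProj ι) := by
  refine ⟨?_, ?_⟩ <;> ext i j <;> simp [constProj, mul_apply]

lemma trace_constProj : (constProj ι).trace = 1 := by
  simp [constProj, trace]

variable {κ l : Type*}

lemma kronecker_one_add_kronecker_const [DecidableEq ι] (A B : Matrix l κ ℝ) :
    A ⊗ₖ 1 + B ⊗ₖ (of fun _ _ => 1 : Matrix ι ι ℝ)
      = A ⊗ₖ (1 - constProj ι) + (A + (Fintype.card ι : ℝ) • B) ⊗ₖ constProj ι := by
  rw [← card_smul_constProj, kronecker_smul, add_kronecker, smul_kronecker, ← add_assoc,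
    ← kronecker_add, sub_add_cancel]

lemma conjTranspose_mul_self_kronecker_const [Fintype l] (E : Matrix l κ ℝ) :
    let J : Matrix Unit ι ℝ := of fun _ _ => 1
    (E ⊗ₖ J)ᴴ * (E ⊗ₖ J)
      = ((Fintype.card ι : ℝ) • (Eᴴ * E)) ⊗ₖ constProj ι := by
  intro J
  rw [conjTranspose_kronecker, ← mul_kronecker_mul, smul_kronecker, ← kronecker_smul,
    card_smul_constProj]
  congr 1
  ext i j
  simp [J, mul_apply]

end constProj

def restrictedColEquiv (n : ℕ) : Fin 2 × Fin n ≃ Fin n ⊕ Fin n :=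
  (finTwoEquiv.prodCongr (Equiv.refl _)).trans (Equiv.boolProdEquivSum _)

def restrictedRowEquiv (n : ℕ) :
    (Fin 2 × Fin n) ⊕ (Fin 2 × Unit) ≃ Fin n ⊕ Fin n ⊕ Fin 2 :=
  (Equiv.sumCongr (restrictedColEquiv n) (Equiv.prodPUnit _)).trans (Equiv.sumAssoc _ _ _)

lemma restrictedW_submatrix (n : ℕ) (a1 a2 b1 b2 c1 c2 d1 d2 e f g h : ℝ) :
    (restrictedW n a1 a2 b1 b2 c1 c2 d1 d2 e f g h).submatrix (restrictedRowEquiv n)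
        (restrictedColEquiv n) =
      fromRows (!![a1, c1; b1, d1] ⊗ₖ 1 + !![a2, c2; b2, d2] ⊗ₖ of fun _ _ => 1)
        (!![e, g; f, h] ⊗ₖ of fun _ _ => 1) := by
  ext (⟨x, i⟩ | ⟨x, i⟩) ⟨y, j⟩ <;> fin_cases x <;> fin_cases y <;>
    simp [restrictedW, restrictedRowEquiv, restrictedColEquiv, finTwoEquiv, one_apply]

def perpBlock (a1 b1 c1 d1 : ℝ) : Matrix (Fin 2) (Fin 2) ℝ :=
  !![CA1 a1 b1, CB1 a1 b1 c1 d1; CB1 a1 b1 c1 d1, CD1 c1 d1]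

def meanBlock (n : ℕ) (a1 a2 b1 b2 c1 c2 d1 d2 e f g h : ℝ) : Matrix (Fin 2) (Fin 2) ℝ :=
  !![CA1 a1 b1 + n * CA2 n a1 a2 b1 b2 e f,
      CB1 a1 b1 c1 d1 + n * CB2 n a1 a2 b1 b2 c1 c2 d1 d2 e f g h;
    CB1 a1 b1 c1 d1 + n * CB2 n a1 a2 b1 b2 c1 c2 d1 d2 e f g h,
      CD1 c1 d1 + n * CD2 n c1 c2 d1 d2 g h]

lemma perpBlock_eq (a1 b1 c1 d1 : ℝ) :
    perpBlock a1 b1 c1 d1 = !![a1, c1; b1, d1]ᴴ * !![a1, c1; b1, d1] := by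
  ext i j
  fin_cases i <;> fin_cases j <;> simp [perpBlock, mul_apply, CA1, CB1, CD1] <;> ring

lemma meanBlock_eq (n : ℕ) (a1 a2 b1 b2 c1 c2 d1 d2 e f g h : ℝ) :
    meanBlock n a1 a2 b1 b2 c1 c2 d1 d2 e f g h =
      (!![a1, c1; b1, d1] + (n : ℝ) • !![a2, c2; b2, d2])ᴴ
          * (!![a1, c1; b1, d1] + (n : ℝ) • !![a2, c2; b2, d2])
        + (n : ℝ) • (!![e, g; f, h]ᴴ * !![e, g; f, h]) := by
  ext i j
  fin_cases i <;> fin_cases j <;> simp [meanBlock, mul_apply, CA1, CA2, CB1, CB2, CD1, CD2] <;> ring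

lemma posSemidef_perpBlock (a1 b1 c1 d1 : ℝ) : (perpBlock a1 b1 c1 d1).PosSemidef := by
  rw [perpBlock_eq]
  exact posSemidef_conjTranspose_mul_self _

lemma posSemidef_meanBlock (n : ℕ) (a1 a2 b1 b2 c1 c2 d1 d2 e f g h : ℝ) :
    (meanBlock n a1 a2 b1 b2 c1 c2 d1 d2 e f g h).PosSemidef := by
  rw [meanBlock_eq]
  exact (posSemidef_conjTranspose_mul_self _).add
    ((posSemidef_conjTranspose_mul_self _).smul n.cast_nonneg)

lemma det_perpBlock (a1 b1 c1 d1 : ℝ) :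
    (perpBlock a1 b1 c1 d1).det = (a1 * d1 - b1 * c1) ^ 2 := by
  rw [perpBlock, det_fin_two_of, CA1, CB1, CD1]
  ring

lemma conjTranspose_mul_self_restrictedW_submatrix (n : ℕ) [NeZero n]
    (a1 a2 b1 b2 c1 c2 d1 d2 e f g h : ℝ) :
    let W := (restrictedW n a1 a2 b1 b2 c1 c2 d1 d2 e f g h).submatrix (restrictedRowEquiv n)
      (restrictedColEquiv n)
    Wᴴ * W = perpBlock a1 b1 c1 d1 ⊗ₖ (1 - constProj (Fin n))
      + meanBlock n a1 a2 b1 b2 c1 c2 d1 d2 e f g h ⊗ₖ constProj (Fin n) := by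
  have hp := isStarProjection_constProj (ι := Fin n)
  simp only [restrictedW_submatrix, conjTranspose_fromRows_eq_fromCols_conjTranspose,
    fromCols_mul_fromRows, kronecker_one_add_kronecker_const, Fintype.card_fin,
    conjTranspose_kronecker_one_sub_add_kronecker hp.isSelfAdjoint,
    kronecker_one_sub_add_kronecker_mul hp.isIdempotentElem,
    conjTranspose_mul_self_kronecker_const, add_assoc, ← add_kronecker, perpBlock_eq,
    meanBlock_eq]

/-- Lemma 2: explicit formula for the nuclear norm of a restricted-form matrix. -/
theorem nuclearNorm_restrictedW (n : ℕ) (hn : 1 ≤ n)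
    (a1 a2 b1 b2 c1 c2 d1 d2 e f g h : ℝ) :
    nuclearNorm (restrictedW n a1 a2 b1 b2 c1 c2 d1 d2 e f g h) =
      ((n : ℝ) - 1) * Real.sqrt (CA1 a1 b1 + CD1 c1 d1 + 2 * |a1 * d1 - b1 * c1|) +
        Real.sqrt (CA1 a1 b1 + n * CA2 n a1 a2 b1 b2 e f
          + CD1 c1 d1 + n * CD2 n c1 c2 d1 d2 g h
          + 2 * Real.sqrt ((CA1 a1 b1 + n * CA2 n a1 a2 b1 b2 e f)
              * (CD1 c1 d1 + n * CD2 n c1 c2 d1 d2 g h)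
            - (CB1 a1 b1 c1 d1 + n * CB2 n a1 a2 b1 b2 c1 c2 d1 d2 e f g h) ^ 2)) := by
  have : NeZero n := ⟨by omega⟩
  have hM := posSemidef_perpBlock a1 b1 c1 d1
  have hN := posSemidef_meanBlock n a1 a2 b1 b2 c1 c2 d1 d2 e f g h
  rw [← nuclearNorm_submatrix _ (restrictedRowEquiv n) (restrictedColEquiv n),
    nuclearNorm_of_conjTranspose_mul_self_eq isStarProjection_constProj hM hN
      (conjTranspose_mul_self_restrictedW_submatrix n ..),
    hM.trace_sqrt_fin_two, hN.trace_sqrt_fin_two, det_perpBlock, Real.sqrt_sq_eq_abs,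
    trace_sub, trace_one, trace_constProj, Fintype.card_fin, perpBlock, meanBlock,
    trace_fin_two_of, trace_fin_two_of, det_fin_two_of]
  ring_nf
end

section
/- Fix an integer n ≥ 2 and a restricted-form matrix W whose parameters satisfy b1+b2 ≥ d1+d2+1, d1+d2+h ≥ b1+b2+f+1, e+g = 0, f+h = 0, c1 > 0, a1 = 1, and a1+a2+2e−c1−c2−1 = 0. Then for every i ∈ {1,…,n} the OOD margin is strictly positive: q_i > 0. (Theorem 1: positive OOD margin with identity supervision, as established in the proof.) -/
/-- The OOD two-hop logit of output token `y` for input `(a_i, r_1, r_2)`: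
`f_i(y) = W[a_i,y] + W[r_1,y] + W[r_2,y]`. -/
def oodLogit (n : ℕ) (W : Matrix (Fin n ⊕ Fin n ⊕ Fin 2) (Fin n ⊕ Fin n) ℝ)
    (i : Fin n) (y : Fin n ⊕ Fin n) : ℝ :=
  W (Sum.inl i) y + W (Sum.inr (Sum.inr 0)) y + W (Sum.inr (Sum.inr 1)) y

/-- The OOD margin `q_i`: the minimum over output tokens `y ≠ c_i` of
`f_i(c_i) − f_i(y)`. -/
noncomputable def oodMargin (n : ℕ) (W : Matrix (Fin n ⊕ Fin n ⊕ Fin 2) (Fin n ⊕ Fin n) ℝ)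
    (i : Fin n) : ℝ :=
  sInf {v : ℝ | ∃ y : Fin n ⊕ Fin n, y ≠ Sum.inr i ∧
    v = oodLogit n W i (Sum.inr i) - oodLogit n W i y}

/-- Theorem 1 (positive OOD margin with identity supervision): under the stated
parameter constraints the OOD margin of the restricted-form matrix is strictly
positive for every `i`. -/
theorem positive_ood_margin (n : ℕ) (hn : 2 ≤ n)
    (a1 a2 b1 b2 c1 c2 d1 d2 e f g h : ℝ)
    (h4 : d1 + d2 + 1 ≤ b1 + b2)
    (h6 : b1 + b2 + f + 1 ≤ d1 + d2 + h)
    (heg : e + g = 0) (hfh : f + h = 0)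
    (hc1 : 0 < c1) (ha1 : a1 = 1)
    (hstar : a1 + a2 + 2 * e - c1 - c2 - 1 = 0) :
    ∀ i : Fin n, 0 < oodMargin n (restrictedW n a1 a2 b1 b2 c1 c2 d1 d2 e f g h) i := by
  intro i
  have hf : f ≤ -1 := by linarith
  set W := restrictedW n a1 a2 b1 b2 c1 c2 d1 d2 e f g h with hW
  have hlogit_inl : ∀ j : Fin n, oodLogit n W i (Sum.inl j) =
      (if i = j then a1 else 0) + a2 + e + f := by
    intro j
    simp only [oodLogit, hW, restrictedW]
    norm_num
  have hlogit_inr : ∀ j : Fin n, oodLogit n W i (Sum.inr j) =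
      (if i = j then c1 else 0) + c2 + g + h := by
    intro j
    simp only [oodLogit, hW, restrictedW]
    norm_num
  have hne : {v : ℝ | ∃ y : Fin n ⊕ Fin n, y ≠ Sum.inr i ∧
      v = oodLogit n W i (Sum.inr i) - oodLogit n W i y}.Nonempty :=
    ⟨_, Sum.inl i, by simp, rfl⟩
  have hm : (0:ℝ) < min c1 1 := by positivity
  have hle : min c1 1 ≤ oodMargin n W i := by
    apply le_csInf hne
    rintro v ⟨y, hy, rfl⟩
    rcases y with j | j
    · rw [hlogit_inr i, hlogit_inl j, if_pos rfl]
      have h2 : min c1 1 ≤ 1 := min_le_right _ _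
      split_ifs <;> linarith
    · have hij : i ≠ j := fun hh => hy (by rw [hh])
      rw [hlogit_inr i, hlogit_inr j, if_pos rfl, if_neg hij]
      have h2 : min c1 1 ≤ c1 := min_le_left _ _
      linarith
  linarith
end
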